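/- arXiv:2105.13292 — 4 statements merged into one kernel-verified Lean document; each statement's English description precedes it below -/
import Mathlib

section
/- The series ∑_{k=1}^∞ 4^{-k} * C(2k,k) * 2/((2k+1)(2k+2)) converges and equals π - 3. -/
/-!
Write `c m = C(2m, m) / 4^m` and `P_N x = ∑_{m ≤ N} c m x^(2m)`. The recurrence
`(2m + 2) c (m+1) = (2m + 1) c m` telescopes to
`(√(1 - x²) P_N x)' = -(2N + 2) c (N+1) x^(2N+1) / √(1 - x²)`, and comparing derivatives gives
`0 ≤ 1/√(1 - x²) - P_N x ≤ x^(2N+2) / (1 - x²)` on `[0, 1)`. So `2 (1 - x) (1/√(1 - x²) - P_N x)`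
lies between `0` and `2 x^(2N+2)`; it is the derivative of `2 arcsin x + 2 √(1 - x²)` minus a
polynomial, and comparing derivatives once more on `[0, 1]` gives
`0 ≤ π - 2 - ∑_{m ≤ N} c m (2/(2m+1) - 1/(m+1)) ≤ 2/(2N+3)`. Finally
`2/(2m+1) - 1/(m+1) = 2/((2m+1)(2m+2))` and the `m = 0` term equals `1`.
-/

open Finset Real Filter Topology

noncomputable def scaledCentralBinom (m : ℕ) : ℝ := ((2 * m).choose m : ℝ) / 4 ^ m

lemma scaledCentralBinom_zero : scaledCentralBinom 0 = 1 := by simp [scaledCentralBinom]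

lemma scaledCentralBinom_nonneg (m : ℕ) : 0 ≤ scaledCentralBinom m := by
  unfold scaledCentralBinom; positivity

lemma scaledCentralBinom_succ_mul (m : ℕ) :
    scaledCentralBinom (m + 1) * (2 * m + 2) = scaledCentralBinom m * (2 * m + 1) := by
  have h : ((m + 1 : ℕ) : ℝ) * (2 * (m + 1)).choose (m + 1) = 2 * (2 * m + 1) * (2 * m).choose m :=
    mod_cast Nat.succ_mul_centralBinom_succ m
  simp only [scaledCentralBinom, pow_succ]
  field_simp
  push_cast at h
  linear_combination 2 * h

lemma scaledCentralBinom_le_one (m : ℕ) : scaledCentralBinom m ≤ 1 := by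
  induction m with
  | zero => simp [scaledCentralBinom_zero]
  | succ n ih =>
    nlinarith [scaledCentralBinom_succ_mul n, scaledCentralBinom_nonneg n,
      scaledCentralBinom_nonneg (n + 1)]

lemma sub_mem_Icc_of_hasDerivAt_bounds {f f' G G' : ℝ → ℝ} {a b : ℝ} (hab : a ≤ b)
    (hf : ContinuousOn f (Set.Icc a b)) (hf' : ∀ x ∈ Set.Ico a b, HasDerivAt f (f' x) x)
    (hG : ContinuousOn G (Set.Icc a b)) (hG' : ∀ x ∈ Set.Ico a b, HasDerivAt G (G' x) x)
    (hbound : ∀ x ∈ Set.Ico a b, 0 ≤ f' x ∧ f' x ≤ G' x) :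
    f b - f a ∈ Set.Icc 0 (G b - G a) := by
  have hb : b ∈ Set.Icc a b := Set.right_mem_Icc.2 hab
  have hmono := image_le_of_deriv_right_le_deriv_boundary continuousOn_const
    (fun x _ => (hasDerivAt_const x (f a)).hasDerivWithinAt) le_rfl hf
    (fun x hx => (hf' x hx).hasDerivWithinAt) (fun x hx => (hbound x hx).1) hb
  have hcomp := image_le_of_deriv_right_le_deriv_boundary hf
    (fun x hx => (hf' x hx).hasDerivWithinAt) (B := fun x => f a + (G x - G a))
    (by simp) (continuousOn_const.add (hG.sub continuousOn_const))
    (fun x hx => ((hG' x hx).sub_const (G a)).const_add (f a) |>.hasDerivWithinAt)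
    (fun x hx => (hbound x hx).2) hb
  constructor <;> linarith

/-- The Taylor polynomial of degree `2N` of `(1 - x²)^(-1/2)` at `0`. -/
noncomputable def taylorInvSqrt (N : ℕ) (x : ℝ) : ℝ :=
  ∑ m ∈ range (N + 1), scaledCentralBinom m * x ^ (2 * m)

@[fun_prop]
lemma continuous_taylorInvSqrt (N : ℕ) : Continuous (taylorInvSqrt N) := by
  unfold taylorInvSqrt; fun_prop

lemma hasDerivAt_sqrt_one_sub_sq {x : ℝ} (hx : x ^ 2 < 1) :
    HasDerivAt (fun s => √(1 - s ^ 2)) (-x / √(1 - x ^ 2)) x := by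
  have := ((hasDerivAt_pow 2 x).const_sub 1).sqrt (by linarith)
  convert this using 1
  field_simp
  ring

lemma hasDerivAt_sqrt_one_sub_sq_mul_taylorInvSqrt (N : ℕ) {x : ℝ} (hx : x ^ 2 < 1) :
    HasDerivAt (fun s => √(1 - s ^ 2) * taylorInvSqrt N s)
      (-((2 * N + 2) * scaledCentralBinom (N + 1) * x ^ (2 * N + 1)) / √(1 - x ^ 2)) x := by
  have hsq : √(1 - x ^ 2) ^ 2 = 1 - x ^ 2 := sq_sqrt (by linarith)
  have hpos : 0 < √(1 - x ^ 2) := sqrt_pos.2 (by linarith)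
  induction N with
  | zero =>
    have h1 : scaledCentralBinom 1 = 1 / 2 := by
      have h := scaledCentralBinom_succ_mul 0
      norm_num [scaledCentralBinom_zero] at h
      linarith
    convert hasDerivAt_sqrt_one_sub_sq hx using 1
    · ext s; simp [taylorInvSqrt, scaledCentralBinom_zero]
    · rw [h1]; ring
  | succ N ih =>
    have hfun : (fun s => √(1 - s ^ 2) * taylorInvSqrt (N + 1) s) = fun s =>
        √(1 - s ^ 2) * taylorInvSqrt N s +
          scaledCentralBinom (N + 1) * (√(1 - s ^ 2) * s ^ (2 * N + 2)) := by
      funext s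
      simp only [taylorInvSqrt, sum_range_succ _ (N + 1)]
      ring
    rw [hfun]
    refine (ih.add (((hasDerivAt_sqrt_one_sub_sq hx).mul
      (hasDerivAt_pow (2 * N + 2) x)).const_mul _)).congr_deriv ?_
    have hc := scaledCentralBinom_succ_mul (N + 1)
    rw [show 2 * N + 2 - 1 = 2 * N + 1 by omega]
    field_simp
    push_cast at hc ⊢
    linear_combination
      x ^ (2 * N + 3) * hc + 2 * scaledCentralBinom (N + 1) * (N + 1) * x ^ (2 * N + 1) * hsq

lemma taylorInvSqrt_zero (N : ℕ) : taylorInvSqrt N 0 = 1 := by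
  simp [taylorInvSqrt, sum_range_succ', scaledCentralBinom_zero]

lemma inv_sqrt_sub_taylorInvSqrt_mem_Icc (N : ℕ) {x : ℝ} (hx0 : 0 ≤ x) (hx1 : x < 1) :
    (√(1 - x ^ 2))⁻¹ - taylorInvSqrt N x ∈ Set.Icc 0 (x ^ (2 * N + 2) / (1 - x ^ 2)) := by
  have hsq_lt : ∀ s ∈ Set.Ico 0 x, s ^ 2 < 1 := fun s hs => by nlinarith [hs.1, hs.2]
  have hx : 0 < 1 - x ^ 2 := by nlinarith
  have hpos : 0 < √(1 - x ^ 2) := sqrt_pos.2 hx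
  have hbound : ∀ s ∈ Set.Ico 0 x,
      0 ≤ (2 * N + 2) * scaledCentralBinom (N + 1) * s ^ (2 * N + 1) / √(1 - s ^ 2) ∧
      (2 * N + 2) * scaledCentralBinom (N + 1) * s ^ (2 * N + 1) / √(1 - s ^ 2) ≤
        (2 * N + 2) * s ^ (2 * N + 1) / √(1 - x ^ 2) := by
    intro s ⟨hs0, hsx⟩
    have hc := scaledCentralBinom_le_one (N + 1)
    have hc0 := scaledCentralBinom_nonneg (N + 1)
    have hs_pos : 0 < √(1 - s ^ 2) := sqrt_pos.2 (by nlinarith)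
    have hsqrt : √(1 - x ^ 2) ≤ √(1 - s ^ 2) := sqrt_le_sqrt (by nlinarith)
    refine ⟨by positivity, ?_⟩
    calc (2 * N + 2) * scaledCentralBinom (N + 1) * s ^ (2 * N + 1) / √(1 - s ^ 2)
        ≤ (2 * N + 2) * 1 * s ^ (2 * N + 1) / √(1 - x ^ 2) := by gcongr
      _ = _ := by ring
  obtain ⟨hlow, hup⟩ := sub_mem_Icc_of_hasDerivAt_bounds hx0
    (f := fun s => -(√(1 - s ^ 2) * taylorInvSqrt N s))
    (G := fun s => s ^ (2 * N + 2) / √(1 - x ^ 2))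
    (by fun_prop) (fun s hs => (hasDerivAt_sqrt_one_sub_sq_mul_taylorInvSqrt N (hsq_lt s hs)).neg)
    (by fun_prop) (fun s _ => (hasDerivAt_pow _ s).div_const _) fun s hs => by
      rw [neg_div, neg_neg, show 2 * N + 2 - 1 = 2 * N + 1 by omega]
      push_cast
      exact hbound s hs
  have hle_one : √(1 - x ^ 2) * taylorInvSqrt N x ≤ 1 := by
    simpa [taylorInvSqrt_zero] using hlow
  have hdefect_le : 1 - √(1 - x ^ 2) * taylorInvSqrt N x ≤ x ^ (2 * N + 2) / √(1 - x ^ 2) :=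
    sub_le_iff_le_add'.2 (by simpa [taylorInvSqrt_zero] using hup)
  have hrem : (√(1 - x ^ 2))⁻¹ - taylorInvSqrt N x =
      (1 - √(1 - x ^ 2) * taylorInvSqrt N x) / √(1 - x ^ 2) := by
    field_simp
  rw [hrem, show x ^ (2 * N + 2) / (1 - x ^ 2) = x ^ (2 * N + 2) / √(1 - x ^ 2) / √(1 - x ^ 2) by
    rw [div_div, mul_self_sqrt hx.le]]
  exact ⟨div_nonneg (by linarith) hpos.le, div_le_div_of_nonneg_right hdefect_le hpos.le⟩

noncomputable def remainderPrimitive (N : ℕ) (x : ℝ) : ℝ :=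
  2 * arcsin x + 2 * √(1 - x ^ 2) - ∑ m ∈ range (N + 1),
    scaledCentralBinom m * (2 * x ^ (2 * m + 1) / (2 * m + 1) - x ^ (2 * m + 2) / (m + 1))

lemma hasDerivAt_remainderPrimitive (N : ℕ) {x : ℝ} (hx : x ^ 2 < 1) :
    HasDerivAt (remainderPrimitive N)
      (2 * (1 - x) * ((√(1 - x ^ 2))⁻¹ - taylorInvSqrt N x)) x := by
  have hx1 : x ≠ 1 := by rintro rfl; norm_num at hx
  have hx1' : x ≠ -1 := by rintro rfl; norm_num at hx
  have hsum : HasDerivAt (fun x : ℝ => ∑ m ∈ range (N + 1), scaledCentralBinom m *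
      (2 * x ^ (2 * m + 1) / (2 * m + 1) - x ^ (2 * m + 2) / (m + 1)))
      (∑ m ∈ range (N + 1), scaledCentralBinom m * (2 * x ^ (2 * m) - 2 * x ^ (2 * m + 1))) x := by
    refine HasDerivAt.fun_sum fun m _ => ?_
    refine ((((hasDerivAt_pow _ x).const_mul 2).div_const _).sub
      ((hasDerivAt_pow _ x).div_const _)).const_mul _ |>.congr_deriv ?_
    rw [show 2 * m + 1 - 1 = 2 * m by omega, show 2 * m + 2 - 1 = 2 * m + 1 by omega]
    field_simp
    push_cast
    ring
  have h := (((hasDerivAt_arcsin hx1' hx1).const_mul 2).add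
    ((hasDerivAt_sqrt_one_sub_sq hx).const_mul 2)).sub hsum
  refine h.congr_deriv ?_
  have hsum_eq : ∑ m ∈ range (N + 1), scaledCentralBinom m * (2 * x ^ (2 * m) - 2 * x ^ (2 * m + 1))
      = 2 * (1 - x) * taylorInvSqrt N x := by
    rw [taylorInvSqrt, mul_sum]
    exact sum_congr rfl fun m _ => by ring
  rw [hsum_eq]
  ring

lemma remainderPrimitive_one_sub_zero (N : ℕ) :
    remainderPrimitive N 1 - remainderPrimitive N 0 =
      π - 2 - ∑ m ∈ range (N + 1), scaledCentralBinom m * (2 / (2 * m + 1) - 1 / (m + 1)) := by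
  simp only [remainderPrimitive, arcsin_one, arcsin_zero, one_pow, sub_self, sqrt_zero, mul_zero,
    add_zero, mul_one, one_div, ne_eq, OfNat.ofNat_ne_zero, not_false_eq_true, zero_pow, sub_zero,
    sqrt_one, zero_add, Nat.add_eq_zero_iff, mul_eq_zero, false_or, one_ne_zero, and_false,
    zero_div, sum_const_zero]
  ring

lemma pi_sub_two_sub_sum_mem_Icc (N : ℕ) :
    π - 2 - ∑ m ∈ range (N + 1), scaledCentralBinom m * (2 / (2 * m + 1) - 1 / (m + 1)) ∈
      Set.Icc 0 (2 / (2 * (N : ℝ) + 3)) := by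
  have hbound : ∀ x ∈ Set.Ico (0 : ℝ) 1, 0 ≤ 2 * (1 - x) * ((√(1 - x ^ 2))⁻¹ - taylorInvSqrt N x) ∧
      2 * (1 - x) * ((√(1 - x ^ 2))⁻¹ - taylorInvSqrt N x) ≤ 2 * x ^ (2 * N + 2) := by
    intro x ⟨hx0, hx1⟩
    obtain ⟨hlow, hup⟩ := inv_sqrt_sub_taylorInvSqrt_mem_Icc N hx0 hx1
    have hx : 1 - x ^ 2 ≠ 0 := by nlinarith
    refine ⟨mul_nonneg (by linarith) hlow, ?_⟩
    calc 2 * (1 - x) * ((√(1 - x ^ 2))⁻¹ - taylorInvSqrt N x)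
        ≤ 2 * (1 - x) * (x ^ (2 * N + 2) / (1 - x ^ 2)) := by gcongr
      _ = 2 * x ^ (2 * N + 2) / (1 + x) := by field_simp; ring
      _ ≤ 2 * x ^ (2 * N + 2) := div_le_self (by positivity) (by linarith)
  have h := sub_mem_Icc_of_hasDerivAt_bounds zero_le_one (f := remainderPrimitive N)
    (G := fun x => 2 * x ^ (2 * N + 3) / (2 * N + 3))
    (by unfold remainderPrimitive; fun_prop)
    (fun x hx => hasDerivAt_remainderPrimitive N (by nlinarith [hx.1, hx.2]))
    (by fun_prop) (fun x _ => ((hasDerivAt_pow _ x).const_mul 2).div_const _) fun x hx => by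
      rw [show 2 * N + 3 - 1 = 2 * N + 2 by omega]
      convert hbound x hx using 2
      push_cast
      field_simp
  rw [remainderPrimitive_one_sub_zero] at h
  convert h using 2
  norm_num

theorem stmt_1 :
    HasSum (fun k : ℕ =>
        ((2 * (k + 1)).choose (k + 1) : ℝ) / 4 ^ (k + 1) *
          (2 / ((2 * (k : ℝ) + 3) * (2 * (k : ℝ) + 4))))
      (Real.pi - 3) := by
  set A : ℕ → ℝ := fun m => scaledCentralBinom m * (2 / (2 * m + 1) - 1 / (m + 1))
  have hterm : ∀ k : ℕ, ((2 * (k + 1)).choose (k + 1) : ℝ) / 4 ^ (k + 1) *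
      (2 / ((2 * (k : ℝ) + 3) * (2 * (k : ℝ) + 4))) = A (k + 1) := fun k => by
    simp only [A, scaledCentralBinom]
    push_cast
    field_simp
    ring
  have hpartial : ∀ n, ∑ k ∈ range n, A (k + 1) = ∑ m ∈ range (n + 1), A m - 1 := fun n => by
    rw [sum_range_succ']
    norm_num [A, scaledCentralBinom_zero]
  have hlim : Tendsto (fun n : ℕ => π - 3 - 2 / (2 * (n : ℝ) + 3)) atTop (𝓝 (π - 3)) := by
    simpa using tendsto_const_nhds.sub (tendsto_const_nhds.div_atTop
      (tendsto_atTop_add_const_right _ 3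
        ((tendsto_natCast_atTop_atTop (R := ℝ)).const_mul_atTop two_pos)))
  rw [hasSum_iff_tendsto_nat_of_nonneg (fun k => by positivity)]
  simp only [hterm, hpartial]
  refine tendsto_of_tendsto_of_tendsto_of_le_of_le hlim tendsto_const_nhds (fun n => ?_) fun n => ?_
  all_goals
    obtain ⟨h0, h1⟩ := pi_sub_two_sub_sum_mem_Icc n
    linarith
end

section
/- Let u_{nm} ≥ 0 for 0 ≤ n ≤ m and U(x) = ∑_{0≤n≤m} u_{nm} L_{nm}(x) as above (values in [0, ∞]). Then ∫_{−1}^{1} U(x) dx = 2 ∑_{k=1}^∞ ∑_{m−n=2k−1, n≥0} 4^{−k} C(2k,k) u_{nm}. -/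
/-!
Write `x = ∑ dⱼ 2^{-j-1}` with `dⱼ = ±1`. Off the countable set of dyadic points the digits are
forced: `dⱼ = 2 (⌊2^j (x+1)⌋ mod 2) - 1`, so `U` may be computed with these canonical digits.
Exchanging sum and integral, `∫ U = ∑ u_{nm} |{L_{nm} = 1}|`. A sum of `m - n + 1` signs vanishes
only if `m - n = 2k + 1` is odd, and then the event depends only on `N = ⌊2^m (x+1)⌋ < 2^{m+1}`:
exactly `k + 1` of the lowest `2k + 2` binary digits of `N` must be `1`. There are
`2^n C(2k+2, k+1)` such `N`, each contributing an interval of length `2^{-m}`, which gives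
`|{L_{n,n+2k+1} = 1}| = 2 C(2k+2, k+1) / 4^{k+1}`.
-/

open MeasureTheory

/-- `U u d x` counts loops of the signed binary digit sequence `d x` with weights `u n m`,
where the pair `(n, m)` with `n ≤ m` contributes `u n m` iff `∑_{j=n}^m (d x)_j = 0`. -/
noncomputable def U (u : ℕ → ℕ → ENNReal) (d : ℝ → ℕ → ℤ) (x : ℝ) : ENNReal :=
  ∑' p : ℕ × ℕ,
    if p.1 ≤ p.2 ∧ (∑ j ∈ Finset.Icc p.1 p.2, d x j) = 0 then u p.1 p.2 else 0

open Finset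
open scoped ENNReal

theorem sum_range_two_mul {M : Type*} [AddCommMonoid M] (f : ℕ → M) (K : ℕ) :
    ∑ N ∈ range (2 * K), f N = ∑ q ∈ range K, (f (2 * q) + f (2 * q + 1)) := by
  induction K with
  | zero => simp
  | succ K ih => rw [Nat.mul_succ, sum_range_succ, sum_range_succ, ih, sum_range_succ, add_assoc]

def lowBitCount (L N : ℕ) : ℕ := ∑ i ∈ range L, N / 2 ^ i % 2

theorem lowBitCount_succ (L N : ℕ) :
    lowBitCount (L + 1) N = N % 2 + lowBitCount L (N / 2) := by
  simp only [lowBitCount, sum_range_succ', pow_zero, Nat.div_one, pow_succ',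
    Nat.div_div_eq_div_mul]
  ring

theorem card_lowBitCount_eq (L B t : ℕ) :
    #{N ∈ range (2 ^ L * B) | lowBitCount L N = t} = B * L.choose t := by
  induction L generalizing t with
  | zero => rcases t with _ | t <;> simp [lowBitCount]
  | succ L ih =>
    have hsplit : #{N ∈ range (2 ^ (L + 1) * B) | lowBitCount (L + 1) N = t} =
        #{q ∈ range (2 ^ L * B) | lowBitCount L q = t} +
          #{q ∈ range (2 ^ L * B) | lowBitCount L q + 1 = t} := by
      simp only [card_filter, pow_succ', mul_assoc, sum_range_two_mul, lowBitCount_succ,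
        sum_add_distrib]
      have h0 (q : ℕ) : 2 * q / 2 = q := by omega
      have h1 (q : ℕ) : (2 * q + 1) / 2 = q := by omega
      congr 1 <;> refine sum_congr rfl fun q _ => ?_ <;> simp only [h0, h1] <;> congr 2 <;> omega
    rcases t with _ | t
    · simp [hsplit, ih]
    · simp [hsplit, ih, Nat.choose_succ_succ', mul_add, add_comm]

theorem preimage_floor_mul_add_singleton {c : ℝ} (hc : 0 < c) (a : ℝ) (N : ℤ) :
    (fun x : ℝ => ⌊c * (x + a)⌋) ⁻¹' {N} = Set.Ico (N / c - a) ((N + 1) / c - a) := by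
  ext x
  simp only [Set.mem_preimage, Set.mem_singleton_iff, Int.floor_eq_iff, Set.mem_Ico,
    sub_le_iff_le_add, lt_sub_iff_add_lt, div_le_iff₀ hc, lt_div_iff₀ hc]
  constructor <;> rintro ⟨h1, h2⟩ <;> constructor <;> linarith

theorem volume_preimage_floor_mul_add {c : ℝ} (hc : 0 < c) (a : ℝ) (F : Finset ℤ) :
    volume ((fun x : ℝ => ⌊c * (x + a)⌋) ⁻¹' F) = #F * ENNReal.ofReal c⁻¹ := by
  rw [← sum_measure_preimage_singleton F fun N _ => by
    rw [preimage_floor_mul_add_singleton hc]; exact measurableSet_Ico]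
  have hlength (N : ℤ) : ((N + 1) / c - a) - (N / c - a) = c⁻¹ := by field_simp; ring
  simp only [preimage_floor_mul_add_singleton hc, Real.volume_Ico, hlength, sum_const,
    nsmul_eq_mul]

theorem mem_Ico_iff_floor_two_pow_mul {x : ℝ} (m : ℕ) :
    x ∈ Set.Ico (-1) 1 ↔ 0 ≤ ⌊2 ^ m * (x + 1)⌋ ∧ ⌊2 ^ m * (x + 1)⌋ < 2 ^ (m + 1) := by
  have h2m : (0 : ℝ) < 2 ^ m := by positivity
  rw [Int.floor_nonneg, Int.floor_lt, Set.mem_Ico]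
  push_cast
  rw [pow_succ]
  constructor <;> rintro ⟨h1, h2⟩ <;> constructor <;> nlinarith

noncomputable def signedDigit (x : ℝ) (j : ℕ) : ℤ := 2 * (⌊2 ^ j * (x + 1)⌋ % 2) - 1

noncomputable def tailSum (e : ℕ → ℤ) (n : ℕ) : ℝ := ∑' j, (e (j + n) : ℝ) / 2 ^ (j + 1)

section SignedExpansion

variable {e : ℕ → ℤ} (he : ∀ j, e j = 1 ∨ e j = -1)
include he

theorem hasSum_norm_tailSum_terms (n : ℕ) :
    HasSum (fun j => ‖(e (j + n) : ℝ) / 2 ^ (j + 1)‖) 1 := by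
  convert hasSum_geometric_two' 1 using 2 with j
  rcases he (j + n) with h | h <;> simp [h, pow_succ, div_eq_mul_inv, mul_comm]

theorem abs_tailSum_le_one (n : ℕ) : |tailSum e n| ≤ 1 := by
  have h := hasSum_norm_tailSum_terms he n
  rw [← h.tsum_eq, ← Real.norm_eq_abs]
  exact norm_tsum_le_tsum_norm h.summable

theorem tailSum_eq (n : ℕ) : tailSum e n = (e n + tailSum e (n + 1)) / 2 := by
  have hs := (hasSum_norm_tailSum_terms he n).summable.of_norm
  have hshift (j : ℕ) : (e (j + 1 + n) : ℝ) / 2 ^ (j + 1 + 1) =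
      2⁻¹ * (e (j + (n + 1)) / 2 ^ (j + 1)) := by
    rw [add_right_comm j 1 n, add_assoc j n 1, pow_succ]
    ring
  rw [tailSum, hs.tsum_eq_zero_add, tailSum]
  simp only [hshift, tsum_mul_left, zero_add]
  ring

theorem exists_two_pow_mul_add_one_eq {x : ℝ}
    (hx : HasSum (fun j => (e j : ℝ) / 2 ^ (j + 1)) x) (n : ℕ) :
    ∃ z : ℤ, 2 ^ n * (x + 1) = 2 * z + tailSum e n + 1 := by
  induction n with
  | zero => exact ⟨0, by simp [tailSum, hx.tsum_eq]⟩
  | succ n ih =>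
    obtain ⟨z, hz⟩ := ih
    have hstep : (2 : ℝ) ^ (n + 1) * (x + 1) = 4 * z + e n + tailSum e (n + 1) + 2 := by
      rw [pow_succ, mul_comm _ (2 : ℝ), mul_assoc, hz, tailSum_eq he n]
      ring
    rcases he n with h | h <;> rw [h] at hstep
    · exact ⟨2 * z + 1, by rw [hstep]; push_cast; ring⟩
    · exact ⟨2 * z, by rw [hstep]; push_cast; ring⟩

theorem signedDigit_eq_of_hasSum {x : ℝ} (hx : HasSum (fun j => (e j : ℝ) / 2 ^ (j + 1)) x)
    (n : ℕ) (hn : ∀ z : ℤ, 2 ^ n * (x + 1) ≠ z) : signedDigit x n = e n := by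
  obtain ⟨z, hz⟩ := exists_two_pow_mul_add_one_eq he hx n
  have hT := abs_le.mp (abs_tailSum_le_one he (n + 1))
  have hTn := tailSum_eq he n
  have hfloor : ⌊2 ^ n * (x + 1)⌋ = 2 * z + ⌊tailSum e n + 1⌋ := by
    rw [hz, add_assoc, show (2 : ℝ) * z = ((2 * z : ℤ) : ℝ) by push_cast; ring,
      Int.floor_intCast_add]
  rw [signedDigit, hfloor]
  -- `tailSum e n + 1` lies in `[1, 2]` or in `[0, 1]` according to `e n`, and `x` being
  -- non-dyadic excludes the right endpoint.
  rcases he n with h | h <;> rw [h] at hTn ⊢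
  · have hT1 : tailSum e n ≠ 1 := fun h1 => hn (2 * z + 2) (by rw [hz, h1]; push_cast; ring)
    have : ⌊tailSum e n + 1⌋ = 1 := by
      rw [Int.floor_eq_iff]
      push_cast
      exact ⟨by linarith, by contrapose! hT1; linarith⟩
    omega
  · have hT0 : tailSum e n ≠ 0 := fun h0 => hn (2 * z + 1) (by rw [hz, h0]; push_cast; ring)
    have : ⌊tailSum e n + 1⌋ = 0 := by
      rw [Int.floor_eq_iff]
      push_cast
      exact ⟨by linarith, by contrapose! hT0; linarith⟩
    omega

end SignedExpansion

theorem countable_setOf_two_pow_mul_add_one_eq_intCast :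
    {x : ℝ | ∃ (n : ℕ) (z : ℤ), 2 ^ n * (x + 1) = z}.Countable := by
  refine (Set.countable_iUnion fun n : ℕ =>
    Set.countable_range fun z : ℤ => (z : ℝ) / 2 ^ n - 1).mono ?_
  rintro x ⟨n, z, h⟩
  exact Set.mem_iUnion.2 ⟨n, z, show (z : ℝ) / 2 ^ n - 1 = x by rw [← h]; field_simp; ring⟩

theorem ae_eq_signedDigit {μ : Measure ℝ} [NullSingletonClass μ] {d : ℝ → ℕ → ℤ}
    (hd : ∀ᵐ x ∂μ, (∀ n, d x n = 1 ∨ d x n = -1) ∧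
      HasSum (fun n : ℕ => (d x n : ℝ) / 2 ^ (n + 1)) x) :
    ∀ᵐ x ∂μ, d x = signedDigit x := by
  filter_upwards [hd, countable_setOf_two_pow_mul_add_one_eq_intCast.ae_notMem μ]
    with x ⟨hpm, hx⟩ hnd
  funext n
  exact (signedDigit_eq_of_hasSum hpm hx n fun z h => hnd ⟨n, z, h⟩).symm

/-- The event `L_{nm} = 1`. -/
def loopSet (d : ℝ → ℕ → ℤ) (n m : ℕ) : Set ℝ := {x | n ≤ m ∧ ∑ j ∈ Icc n m, d x j = 0}

theorem measurableSet_loopSet {d : ℝ → ℕ → ℤ} (hd : ∀ j, Measurable fun x => d x j)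
    (n m : ℕ) : MeasurableSet (loopSet d n m) :=
  (MeasurableSet.const _).inter <|
    (Finset.measurable_sum _ fun j _ => hd j) (measurableSet_singleton 0)

theorem lintegral_U_eq_tsum {μ : Measure ℝ} (w : ℕ → ℕ → ℝ≥0∞) {d : ℝ → ℕ → ℤ}
    (hd : ∀ j, Measurable fun x => d x j) :
    ∫⁻ x, U w d x ∂μ = ∑' p : ℕ × ℕ, w p.1 p.2 * μ (loopSet d p.1 p.2) := by
  simp only [U]
  refine (lintegral_tsum fun p => ?_).trans (tsum_congr fun p => ?_)
  · exact (Measurable.ite (measurableSet_loopSet hd p.1 p.2) measurable_const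
      measurable_const).aemeasurable
  rw [← lintegral_indicator_const (measurableSet_loopSet hd p.1 p.2)]
  simp only [Set.indicator_apply, loopSet, Set.mem_ofPred_eq]

theorem measurable_signedDigit (j : ℕ) : Measurable fun x => signedDigit x j :=
  (measurable_of_countable fun N : ℤ => 2 * (N % 2) - 1).comp
    (Int.measurable_floor.comp ((measurable_id.add_const 1).const_mul _))

theorem loopSet_signedDigit_eq_empty {n m : ℕ} (h : ∀ k, m ≠ n + 2 * k + 1) :
    loopSet signedDigit n m = ∅ := by
  refine Set.eq_empty_of_forall_notMem fun x ⟨hnm, hsum⟩ => ?_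
  have : ∑ j ∈ Icc n m, signedDigit x j =
      2 * ∑ j ∈ Icc n m, (⌊2 ^ j * (x + 1)⌋ % 2) - (m + 1 - n : ℕ) := by
    simp [signedDigit, sum_sub_distrib, mul_sum, Nat.card_Icc]
  have := h ((m - n) / 2)
  omega

theorem signedDigit_eq_of_floor_eq {x : ℝ} {m N : ℕ} (hN : ⌊2 ^ m * (x + 1)⌋ = N) {j : ℕ}
    (hj : j ≤ m) : signedDigit x j = 2 * (N / 2 ^ (m - j) % 2 : ℕ) - 1 := by
  have : (2 : ℝ) ^ j * (x + 1) = 2 ^ m * (x + 1) / ((2 ^ (m - j) : ℕ) : ℝ) := by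
    rw [Nat.cast_pow, Nat.cast_ofNat, ← pow_sub_mul_pow 2 hj]
    field_simp
  rw [signedDigit, this, Int.floor_div_natCast, hN]
  push_cast
  rfl

theorem sum_Icc_signedDigit {x : ℝ} {n m N : ℕ} (hnm : n ≤ m) (hN : ⌊2 ^ m * (x + 1)⌋ = N) :
    ∑ j ∈ Icc n m, signedDigit x j = 2 * lowBitCount (m + 1 - n) N - (m + 1 - n : ℕ) := by
  rw [sum_congr rfl fun j hj => signedDigit_eq_of_floor_eq hN (mem_Icc.1 hj).2,
    sum_sub_distrib, ← mul_sum, sum_const, Nat.card_Icc, lowBitCount, nsmul_one]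
  congr 2
  push_cast
  refine sum_nbij' (m - ·) (m - ·) ?_ ?_ ?_ ?_ fun j _ => rfl <;> intro j hj
    <;> simp only [mem_Icc, mem_range] at hj ⊢ <;> omega

theorem volume_loopSet_signedDigit (n k : ℕ) :
    volume.restrict (Set.Icc (-1 : ℝ) 1) (loopSet signedDigit n (n + 2 * k + 1)) =
      2 * ((2 * (k + 1)).choose (k + 1) / 4 ^ (k + 1)) := by
  set m := n + 2 * k + 1
  have hm : m + 1 - n = 2 * (k + 1) := by omega
  have hrange : 2 ^ (2 * (k + 1)) * 2 ^ n = 2 ^ (m + 1) := by rw [← pow_add]; congr 1; omega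
  have hset : loopSet signedDigit n m ∩ Set.Ico (-1) 1 = (fun x => ⌊(2 : ℝ) ^ m * (x + 1)⌋) ⁻¹'
      ({N ∈ range (2 ^ (2 * (k + 1)) * 2 ^ n) | lowBitCount (2 * (k + 1)) N = k + 1}).image
        (Nat.cast : ℕ → ℤ) := by
    ext x
    simp only [Set.mem_inter_iff, Set.mem_preimage, mem_coe, mem_image, mem_filter, mem_range,
      mem_Ico_iff_floor_two_pow_mul m, loopSet, Set.mem_ofPred_eq, hrange]
    generalize hf : ⌊(2 : ℝ) ^ m * (x + 1)⌋ = f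
    constructor
    · rintro ⟨⟨-, hsum⟩, h0, h1⟩
      obtain ⟨N, rfl⟩ := Int.eq_ofNat_of_zero_le h0
      rw [sum_Icc_signedDigit (by omega) hf, hm] at hsum
      exact ⟨N, ⟨by exact_mod_cast h1, by omega⟩, rfl⟩
    · rintro ⟨N, ⟨hN, hcount⟩, rfl⟩
      refine ⟨⟨by omega, ?_⟩, by positivity, by exact_mod_cast hN⟩
      rw [sum_Icc_signedDigit (by omega) hf, hm, hcount]
      push_cast
      ring
  rw [← Measure.restrict_congr_set Ico_ae_eq_Icc,
    Measure.restrict_apply (measurableSet_loopSet measurable_signedDigit _ _), hset,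
    volume_preimage_floor_mul_add (by positivity), card_image_of_injective _ Nat.cast_injective,
    card_lowBitCount_eq, ENNReal.ofReal_inv_of_pos (by positivity),
    ENNReal.ofReal_pow zero_le_two, ENNReal.ofReal_ofNat, ← div_eq_mul_inv, ← mul_div_assoc,
    ENNReal.div_eq_div_iff (by positivity) (by simp) (by positivity) (by simp)]
  norm_cast
  rw [show 4 = 2 ^ 2 by rfl, ← pow_mul]
  ring

theorem stmt_15_general (u : ℕ → ℕ → ℝ)
    (d : ℝ → ℕ → ℤ)
    (hd : ∀ᵐ x ∂(volume.restrict (Set.Icc (-1 : ℝ) 1)),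
      (∀ n, d x n = 1 ∨ d x n = -1) ∧ HasSum (fun n : ℕ => (d x n : ℝ) / 2 ^ (n + 1)) x) :
    ∫⁻ x in Set.Icc (-1 : ℝ) 1, U (fun n m => ENNReal.ofReal (u n m)) d x =
      2 * ∑' (k : ℕ) (n : ℕ),
        ((2 * (k + 1)).choose (k + 1) : ENNReal) / 4 ^ (k + 1) *
          ENNReal.ofReal (u n (n + 2 * k + 1)) := by
  set w : ℕ → ℕ → ℝ≥0∞ := fun n m => ENNReal.ofReal (u n m)
  have hU : ∀ᵐ x ∂(volume.restrict (Set.Icc (-1 : ℝ) 1)), U w d x = U w signedDigit x := by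
    filter_upwards [ae_eq_signedDigit hd] with x hx
    rw [U, U, hx]
  have hloop : ∀ p : ℕ × ℕ, p ∉ Set.range (fun q : ℕ × ℕ => (q.2, q.2 + 2 * q.1 + 1)) →
      loopSet signedDigit p.1 p.2 = ∅ := fun p hp =>
    loopSet_signedDigit_eq_empty fun k hk => hp ⟨(k, p.1), Prod.ext rfl hk.symm⟩
  have hinj : Function.Injective fun q : ℕ × ℕ => (q.2, q.2 + 2 * q.1 + 1) := by
    intro q q' h
    simp only [Prod.mk.injEq] at h
    ext <;> omega
  rw [lintegral_congr_ae hU, lintegral_U_eq_tsum w measurable_signedDigit,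
    ← hinj.tsum_eq fun p hp => by_contra fun h => hp (by simp [hloop p h]),
    ENNReal.tsum_prod', ← ENNReal.tsum_mul_left]
  refine tsum_congr fun k => ?_
  rw [← ENNReal.tsum_mul_left]
  refine tsum_congr fun n => ?_
  rw [volume_loopSet_signedDigit]
  ring

theorem stmt_15 (u : ℕ → ℕ → ℝ) (hu : ∀ n m, n ≤ m → 0 ≤ u n m)
    (d : ℝ → ℕ → ℤ) (hmeas : ∀ n, Measurable fun x => d x n)
    (hd : ∀ᵐ x ∂(volume.restrict (Set.Icc (-1 : ℝ) 1)),
      (∀ n, d x n = 1 ∨ d x n = -1) ∧ HasSum (fun n : ℕ => (d x n : ℝ) / 2 ^ (n + 1)) x) :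
    ∫⁻ x in Set.Icc (-1 : ℝ) 1, U (fun n m => ENNReal.ofReal (u n m)) d x =
      2 * ∑' (k : ℕ) (n : ℕ),
        ((2 * (k + 1)).choose (k + 1) : ENNReal) / 4 ^ (k + 1) *
          ENNReal.ofReal (u n (n + 2 * k + 1)) :=
  stmt_15_general u d hd
end

section
/- With U as above and all u_{nm} ≥ 0, the essential supremum of U on [−1,1] equals U(1/3) = ∑_{k=1}^∞ ∑_{m−n=2k−1, n≥0} u_{nm} (values in [0,∞]), i.e., U(x) ≤ U(1/3) for almost every x, with equality at x = ±1/3. -/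
/-!
A sum of `±1`'s has the parity of its number of terms, so a `±1` digit sequence can only have a
loop on `[n, m]` when `m - n` is odd, and the alternating expansion of `1/3` has a loop on every
such interval. Hence `U x ≤ U (1/3)` wherever the digits of `x` are `±1`, i.e. almost everywhere.
Conversely, the map `x ↦ 1 - 2x` (drop the leading digit `1`, then negate) fixes `1/3` and doubles
distances, so points within `3⁻¹ 2⁻ᵏ` of `1/3` share its first `k` digits; such points form a set of
positive measure on which `U` dominates any given finite part of the series for `U (1/3)`.
Negating all digits, as happens at `-1/3`, does not change which sums vanish.
-/

open MeasureTheory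

section SignedBinary

variable {ε : ℕ → ℤ} {x : ℝ}

lemma abs_le_one_of_hasSum_signedBinary (hε : ∀ n, ε n = 1 ∨ ε n = -1)
    (hx : HasSum (fun n => (ε n : ℝ) / 2 ^ (n + 1)) x) : |x| ≤ 1 := by
  have hgeom : HasSum (fun n : ℕ => (1 : ℝ) / 2 ^ (n + 1)) 1 := by
    convert hasSum_geometric_two' 1 using 2 with n
    rw [pow_succ, div_div, mul_comm]
  have hdigit : ∀ n, |(ε n : ℝ)| = 1 := fun n => by
    rcases hε n with h | h <;> simp [h]
  rw [abs_le]
  constructor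
  · refine hasSum_le (fun n => ?_) hgeom.neg hx
    rw [← neg_div, div_le_div_iff_of_pos_right (by positivity)]
    exact neg_le_of_abs_le (hdigit n).le
  · refine hasSum_le (fun n => ?_) hx hgeom
    rw [div_le_div_iff_of_pos_right (by positivity)]
    exact le_of_abs_le (hdigit n).le

lemma hasSum_signedBinary_tail (hx : HasSum (fun n => (ε n : ℝ) / 2 ^ (n + 1)) x) :
    HasSum (fun n => (ε (n + 1) : ℝ) / 2 ^ (n + 1)) (2 * x - ε 0) := by
  have h := ((hasSum_nat_add_iff' 1).mpr hx).mul_left 2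
  rw [Finset.sum_range_one, mul_sub, zero_add, pow_one, mul_div_cancel₀ _ two_ne_zero] at h
  have hterm : (fun n => 2 * ((ε (n + 1) : ℝ) / 2 ^ (n + 1 + 1))) =
      fun n => (ε (n + 1) : ℝ) / 2 ^ (n + 1) := by
    ext n
    rw [pow_succ]
    field_simp
  rwa [hterm] at h

lemma signedBinary_head_eq_one_of_pos (hε : ∀ n, ε n = 1 ∨ ε n = -1)
    (hx : HasSum (fun n => (ε n : ℝ) / 2 ^ (n + 1)) x) (hpos : 0 < x) : ε 0 = 1 := by
  have htail := abs_le_one_of_hasSum_signedBinary (fun n => hε (n + 1))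
    (hasSum_signedBinary_tail hx)
  rcases hε 0 with h | h
  · exact h
  · rw [h] at htail
    push_cast at htail
    linarith [(abs_le.mp htail).2]

lemma signedBinary_eq_alternating_of_near_third (hε : ∀ n, ε n = 1 ∨ ε n = -1)
    (hx : HasSum (fun n => (ε n : ℝ) / 2 ^ (n + 1)) x) {k : ℕ}
    (hk : 2 ^ k * |x - 1 / 3| < 1 / 3) : ∀ j < k, ε j = (-1) ^ j := by
  induction k generalizing ε x with
  | zero => intro j hj; omega
  | succ k ih =>
    have hclose : |x - 1 / 3| < 1 / 3 := by
      have : (1 : ℝ) ≤ 2 ^ (k + 1) := one_le_pow₀ (by norm_num)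
      nlinarith [abs_nonneg (x - 1 / 3)]
    have h0 : ε 0 = 1 :=
      signedBinary_head_eq_one_of_pos hε hx (by linarith [(abs_lt.mp hclose).1])
    have hrest := ih (ε := fun n => -ε (n + 1)) (x := -(2 * x - ε 0))
      (fun n => (hε (n + 1)).symm.imp neg_eq_iff_eq_neg.mpr neg_eq_iff_eq_neg.mpr)
      (by simpa [neg_div] using (hasSum_signedBinary_tail hx).neg)
      (by
        rw [h0, show -(2 * x - ((1 : ℤ) : ℝ)) - 1 / 3 = -2 * (x - 1 / 3) by push_cast; ring,
          abs_mul, abs_neg, abs_two, ← mul_assoc, ← pow_succ]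
        exact hk)
    rintro (_ | j) hj
    · exact h0
    · rw [pow_succ, mul_neg_one, ← hrest j (by omega), neg_neg]

end SignedBinary

abbrev IsLoop (ε : ℕ → ℤ) (n m : ℕ) : Prop :=
  n ≤ m ∧ ∑ j ∈ Finset.Icc n m, ε j = 0

section Loops

variable {ε δ : ℕ → ℤ} {n m : ℕ}

lemma isLoop_alternating_iff : IsLoop (fun j => (-1) ^ j) n m ↔ n ≤ m ∧ Odd (m - n) := by
  refine and_congr_right fun hnm => ?_
  rw [← Finset.Ico_add_one_right_eq_Icc, Finset.sum_Ico_eq_sum_range,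
    show m + 1 - n = (m - n) + 1 by omega]
  simp_rw [pow_add, ← Finset.mul_sum, neg_one_geom_sum, Nat.even_add_one,
    Nat.not_even_iff_odd]
  split_ifs with h <;> simp [h]

lemma IsLoop.odd_sub (hε : ∀ j, ε j = 1 ∨ ε j = -1) (h : IsLoop ε n m) : Odd (m - n) := by
  have hcard : ((m + 1 - n : ℕ) : ZMod 2) = 0 := by
    have h2 := congrArg (Int.cast : ℤ → ZMod 2) h.2
    push_cast at h2
    rw [Finset.sum_congr rfl fun j _ => show (ε j : ZMod 2) = 1 by
      rcases hε j with h1 | h1 <;> rw [h1] <;> decide] at h2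
    simpa using h2
  rw [ZMod.natCast_eq_zero_iff] at hcard
  rw [Nat.odd_iff]
  omega

lemma IsLoop.alternating (hε : ∀ j, ε j = 1 ∨ ε j = -1) (h : IsLoop ε n m) :
    IsLoop (fun j => (-1) ^ j) n m :=
  isLoop_alternating_iff.mpr ⟨h.1, h.odd_sub hε⟩

lemma isLoop_neg_iff : IsLoop (-ε) n m ↔ IsLoop ε n m := by
  simp [Finset.sum_neg_distrib]

lemma isLoop_congr (h : ∀ j ≤ m, ε j = δ j) : IsLoop ε n m ↔ IsLoop δ n m :=
  and_congr_right fun _ => by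
    rw [Finset.sum_congr rfl fun j hj => h j (Finset.mem_Icc.mp hj).2]

end Loops

lemma tsum_ite_odd_sub {α : Type*} [AddCommMonoid α] [TopologicalSpace α] (f : ℕ → α) (n : ℕ) :
    ∑' m, (if n ≤ m ∧ Odd (m - n) then f m else 0) = ∑' k, f (n + 2 * k + 1) := by
  have hinj : Function.Injective fun k => n + 2 * k + 1 := fun a b h => by simpa using h
  rw [← hinj.tsum_eq]
  · refine tsum_congr fun k => ?_
    rw [if_pos ⟨by omega, ⟨k, by omega⟩⟩]
  · intro m hm
    by_cases h : n ≤ m ∧ Odd (m - n)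
    · obtain ⟨k, hk⟩ := h.2
      exact ⟨k, show n + 2 * k + 1 = m by omega⟩
    · simp [h] at hm

section U

variable (u : ℕ → ℕ → ENNReal) (d : ℝ → ℕ → ℤ)

lemma U_eq_tsum_isLoop (x : ℝ) :
    U u d x = ∑' p : ℕ × ℕ, if IsLoop (d x) p.1 p.2 then u p.1 p.2 else 0 :=
  rfl

lemma U_le_U_of_isLoop {x y : ℝ} (h : ∀ n m, IsLoop (d x) n m → IsLoop (d y) n m) :
    U u d x ≤ U u d y :=
  ENNReal.tsum_le_tsum fun p => by
    by_cases hp : IsLoop (d x) p.1 p.2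
    · rw [if_pos hp, if_pos (h _ _ hp)]
    · rw [if_neg hp]
      exact zero_le

lemma U_eq_U_of_isLoop_iff {x y : ℝ} (h : ∀ n m, IsLoop (d x) n m ↔ IsLoop (d y) n m) :
    U u d x = U u d y :=
  le_antisymm (U_le_U_of_isLoop u d fun n m => (h n m).mp)
    (U_le_U_of_isLoop u d fun n m => (h n m).mpr)

lemma U_eq_tsum_of_alternating {x : ℝ} (hx : ∀ n, d x n = (-1) ^ n) :
    U u d x = ∑' (k : ℕ) (n : ℕ), u n (n + 2 * k + 1) := by
  rw [U_eq_tsum_isLoop, funext hx,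
    ENNReal.tsum_prod (f := fun n m => if IsLoop (fun j => (-1) ^ j) n m then u n m else 0)]
  simp only [isLoop_alternating_iff, tsum_ite_odd_sub]
  exact ENNReal.tsum_comm

lemma sum_le_U_of_digits_eq {x y : ℝ} (s : Finset (ℕ × ℕ)) {k : ℕ} (hs : ∀ p ∈ s, p.2 < k)
    (h : ∀ j < k, d x j = d y j) :
    ∑ p ∈ s, (if IsLoop (d y) p.1 p.2 then u p.1 p.2 else 0) ≤ U u d x :=
  calc _ = ∑ p ∈ s, (if IsLoop (d x) p.1 p.2 then u p.1 p.2 else 0) :=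
        Finset.sum_congr rfl fun p hp =>
          if_congr (isLoop_congr fun j hj => (h j (by linarith [hs p hp])).symm) rfl rfl
    _ ≤ U u d x := ENNReal.sum_le_tsum s

lemma U_le_essSup_of_frequently_digits_eq {μ : Measure ℝ} {y : ℝ}
    (h : ∀ k, ∃ᵐ x ∂μ, ∀ j < k, d x j = d y j) : U u d y ≤ essSup (U u d) μ := by
  rw [U_eq_tsum_isLoop, ENNReal.tsum_eq_iSup_sum]
  refine iSup_le fun s => Filter.le_limsup_of_frequently_le' ?_
  refine (h (s.sup Prod.snd + 1)).mono fun x hx => sum_le_U_of_digits_eq u d s (fun p hp => ?_) hx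
  exact Nat.lt_succ_of_le (Finset.le_sup (f := Prod.snd) hp)

end U

lemma frequently_restrict_mem_ball {s : Set ℝ} {a r : ℝ} (hr : 0 < r)
    (hsub : Metric.ball a r ⊆ s) : ∃ᵐ x ∂(volume.restrict s), x ∈ Metric.ball a r := by
  rw [frequently_ae_mem_iff, Measure.restrict_apply measurableSet_ball,
    Set.inter_eq_self_of_subset_left hsub, Real.volume_ball]
  exact (ENNReal.ofReal_pos.mpr (by positivity)).ne'

theorem stmt_16_general (u : ℕ → ℕ → ℝ)
    (d : ℝ → ℕ → ℤ)
    (hd : ∀ᵐ x ∂(volume.restrict (Set.Icc (-1 : ℝ) 1)),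
      (∀ n, d x n = 1 ∨ d x n = -1) ∧ HasSum (fun n : ℕ => (d x n : ℝ) / 2 ^ (n + 1)) x)
    (hd13 : ∀ n, d (1 / 3) n = (-1) ^ n)
    (hdm13 : ∀ n, d (-(1 / 3)) n = (-1) ^ (n + 1)) :
    U (fun n m => ENNReal.ofReal (u n m)) d (1 / 3) =
        ∑' (k : ℕ) (n : ℕ), ENNReal.ofReal (u n (n + 2 * k + 1)) ∧
    U (fun n m => ENNReal.ofReal (u n m)) d (-(1 / 3)) =
        U (fun n m => ENNReal.ofReal (u n m)) d (1 / 3) ∧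
    essSup (U (fun n m => ENNReal.ofReal (u n m)) d)
        (volume.restrict (Set.Icc (-1 : ℝ) 1)) =
      U (fun n m => ENNReal.ofReal (u n m)) d (1 / 3) := by
  set v : ℕ → ℕ → ENNReal := fun n m => ENNReal.ofReal (u n m)
  set μ := volume.restrict (Set.Icc (-1 : ℝ) 1)
  have hneg : d (-(1 / 3)) = -d (1 / 3) :=
    funext fun j => by rw [hdm13, Pi.neg_apply, hd13, pow_succ, mul_neg_one]
  have hae_le : ∀ᵐ x ∂μ, U v d x ≤ U v d (1 / 3) := by
    filter_upwards [hd] with x hx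
    refine U_le_U_of_isLoop v d fun n m h => ?_
    rw [funext hd13]
    exact h.alternating hx.1
  have hnear : ∀ k, ∃ᵐ x ∂μ, ∀ j < k, d x j = d (1 / 3) j := by
    intro k
    have hsub : Metric.ball (1 / 3 : ℝ) (1 / 3 / 2 ^ k) ⊆ Set.Icc (-1) 1 := by
      have : 1 / 3 / (2 : ℝ) ^ k ≤ 1 / 3 := div_le_self (by norm_num) (one_le_pow₀ (by norm_num))
      rw [Real.ball_eq_Ioo]
      exact Set.Ioo_subset_Icc_self.trans (Set.Icc_subset_Icc (by linarith) (by linarith))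
    have hball := frequently_restrict_mem_ball (by positivity) hsub
    refine hball.mp (hd.mono fun x hx hxball j hj => ?_)
    rw [Metric.mem_ball, Real.dist_eq, lt_div_iff₀' (by positivity)] at hxball
    rw [hd13]
    exact signedBinary_eq_alternating_of_near_third hx.1 hx.2 hxball j hj
  exact ⟨U_eq_tsum_of_alternating v d hd13,
    U_eq_U_of_isLoop_iff v d fun n m => by rw [hneg, isLoop_neg_iff],
    le_antisymm (essSup_le_of_ae_le _ hae_le) (U_le_essSup_of_frequently_digits_eq v d hnear)⟩

theorem stmt_16 (u : ℕ → ℕ → ℝ) (hu : ∀ n m, n ≤ m → 0 ≤ u n m)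
    (d : ℝ → ℕ → ℤ)
    (hd : ∀ᵐ x ∂(volume.restrict (Set.Icc (-1 : ℝ) 1)),
      (∀ n, d x n = 1 ∨ d x n = -1) ∧ HasSum (fun n : ℕ => (d x n : ℝ) / 2 ^ (n + 1)) x)
    (hd13 : ∀ n, d (1 / 3) n = (-1) ^ n)
    (hdm13 : ∀ n, d (-(1 / 3)) n = (-1) ^ (n + 1)) :
    U (fun n m => ENNReal.ofReal (u n m)) d (1 / 3) =
        ∑' (k : ℕ) (n : ℕ), ENNReal.ofReal (u n (n + 2 * k + 1)) ∧
    U (fun n m => ENNReal.ofReal (u n m)) d (-(1 / 3)) =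
        U (fun n m => ENNReal.ofReal (u n m)) d (1 / 3) ∧
    essSup (U (fun n m => ENNReal.ofReal (u n m)) d)
        (volume.restrict (Set.Icc (-1 : ℝ) 1)) =
      U (fun n m => ENNReal.ofReal (u n m)) d (1 / 3) :=
  stmt_16_general u d hd hd13 hdm13
end

section
/- For the weights u_{nm} = 4/((m+2)(m+3)(m+4)), the function U satisfies U(1/3) = 2 ln 2 − 1, and this is the essential supremum of U on [−1,1]. -/
/-!
A zero-sum interval of a `±1` sequence has even length, and for the alternating digits of
`1/3 = 0.(+-+-…)` every interval of even length sums to zero. Hence `U(x) ≤ U(1/3)` termwise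
wherever the digits are `±1`, and, as the weights depend only on `m`,
`U(1/3) = ∑_k ∑_{m ≥ 2k+1} u_m = ∑_k 2/((2k+3)(2k+4)) = 2 log 2 - 1`
by telescoping the inner sums and comparing with the alternating harmonic series.
Conversely, a point within `1/(3·2^M)` of `1/3` shares its first `M + 1` digits, so on a set
of positive measure `U` dominates every finite partial sum of `U(1/3)`.
-/

open MeasureTheory

open Filter Finset Real Metric
open scoped Topology ENNReal

lemma harmonic_two_mul_sub_harmonic (K : ℕ) :
    (harmonic (2 * K) - harmonic K : ℝ) =
      ∑ k ∈ range K, (1 / (2 * k + 1) - 1 / (2 * k + 2) : ℝ) := by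
  induction K with
  | zero => simp
  | succ K ih =>
    rw [sum_range_succ, ← ih, show 2 * (K + 1) = 2 * K + 1 + 1 by ring, harmonic_succ,
      harmonic_succ, harmonic_succ]
    push_cast
    field_simp
    ring

lemma hasSum_one_div_odd_sub_one_div_even :
    HasSum (fun k : ℕ => (1 / (2 * k + 1) - 1 / (2 * k + 2) : ℝ)) (log 2) := by
  refine (hasSum_iff_tendsto_nat_of_nonneg (fun k => ?_) _).mpr ?_
  · rw [sub_nonneg]
    gcongr
    linarith
  have h2K : Tendsto (fun K : ℕ => 2 * K) atTop atTop :=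
    tendsto_id.const_mul_atTop' two_pos
  have hlim := ((tendsto_harmonic_sub_log.comp h2K).sub tendsto_harmonic_sub_log).add_const
    (log 2)
  rw [sub_self, zero_add] at hlim
  refine hlim.congr' ?_
  filter_upwards [eventually_ne_atTop 0] with K hK
  rw [← harmonic_two_mul_sub_harmonic, Function.comp_apply, Nat.cast_mul, Nat.cast_ofNat,
    log_mul two_ne_zero (Nat.cast_ne_zero.mpr hK)]
  ring

lemma hasSum_two_div_odd_mul_even :
    HasSum (fun k : ℕ => (2 / ((2 * k + 3) * (2 * k + 4)) : ℝ)) (2 * log 2 - 1) := by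
  have h := ((hasSum_nat_add_iff' 1).mpr hasSum_one_div_odd_sub_one_div_even).mul_left 2
  rw [show 2 * log 2 - 1 = 2 * (log 2 - ∑ k ∈ range 1, (1 / (2 * k + 1) - 1 / (2 * k + 2) : ℝ))
    by norm_num; ring]
  refine h.congr_fun fun k => ?_
  push_cast
  field_simp
  ring

noncomputable def loopWeight (m : ℕ) : ℝ :=
  4 / (((m : ℝ) + 2) * ((m : ℝ) + 3) * ((m : ℝ) + 4))

lemma hasSum_loopWeight_add (M : ℕ) :
    HasSum (fun n => loopWeight (n + M)) (2 / ((M + 2) * (M + 3))) := by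
  set b : ℕ → ℝ := fun n => 2 / ((n + M + 2) * (n + M + 3))
  have hterm (n : ℕ) : loopWeight (n + M) = b n - b (n + 1) := by
    simp only [b, loopWeight]
    push_cast
    field_simp
    ring
  have hb : Tendsto b atTop (𝓝 0) := by
    refine tendsto_const_nhds.div_atTop (Tendsto.atTop_mul_atTop₀ ?_ ?_) <;>
      exact tendsto_atTop_add_const_right _ _
        (tendsto_atTop_add_const_right _ _ tendsto_natCast_atTop_atTop)
  refine (hasSum_iff_tendsto_nat_of_nonneg (fun n => by unfold loopWeight; positivity) _).mpr ?_
  simp_rw [hterm, sum_range_sub']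
  simpa [b] using hb.const_sub (b 0)

lemma tsum_ofReal_eq_of_hasSum {f : ℕ → ℝ} {a : ℝ} (hf : HasSum f a) (h0 : ∀ n, 0 ≤ f n) :
    ∑' n, ENNReal.ofReal (f n) = ENNReal.ofReal a := by
  rw [← ENNReal.ofReal_tsum_of_nonneg h0 hf.summable, hf.tsum_eq]

lemma tsum_tsum_loopWeight :
    ∑' k, ∑' n, ENNReal.ofReal (loopWeight (n + (2 * k + 1))) = ENNReal.ofReal (2 * log 2 - 1) := by
  have hinner (k : ℕ) : ∑' n, ENNReal.ofReal (loopWeight (n + (2 * k + 1))) =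
      ENNReal.ofReal (2 / ((2 * k + 3) * (2 * k + 4))) := by
    rw [tsum_ofReal_eq_of_hasSum (hasSum_loopWeight_add _)
      fun n => by unfold loopWeight; positivity]
    push_cast
    ring_nf
  rw [tsum_congr hinner,
    tsum_ofReal_eq_of_hasSum hasSum_two_div_odd_mul_even fun k => by positivity]

lemma sum_range_neg_one_pow_div_two_pow (k : ℕ) :
    ∑ j ∈ range k, ((-1 : ℝ) ^ j / 2 ^ (j + 1)) = 1 / 3 - (-1) ^ k / (3 * 2 ^ k) := by
  induction k with
  | zero => norm_num
  | succ k ih =>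
    rw [sum_range_succ, ih, pow_succ, pow_succ]
    field_simp
    ring

def IsSignedBinaryExpansion (e : ℕ → ℤ) (x : ℝ) : Prop :=
  (∀ n, e n = 1 ∨ e n = -1) ∧ HasSum (fun n : ℕ => (e n : ℝ) / 2 ^ (n + 1)) x

namespace IsSignedBinaryExpansion

variable {e : ℕ → ℤ} {x : ℝ}

lemma abs_le_one (h : IsSignedBinaryExpansion e x) : |x| ≤ 1 := by
  refine h.2.norm_le_of_bounded (hasSum_geometric_two' 1) fun n => ?_
  rcases h.1 n with hn | hn <;> simp [hn, pow_succ, div_eq_mul_inv, mul_comm]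

lemma shift (h : IsSignedBinaryExpansion e x) (k : ℕ) :
    IsSignedBinaryExpansion (fun n => e (n + k))
      (2 ^ k * (x - ∑ j ∈ range k, (e j : ℝ) / 2 ^ (j + 1))) := by
  refine ⟨fun n => h.1 (n + k), ?_⟩
  refine (((hasSum_nat_add_iff' k).mpr h.2).mul_left (2 ^ k)).congr_fun fun n => ?_
  rw [pow_succ, pow_add, pow_succ]
  field_simp
  ring

-- `x = (e 0 + y) / 2` with `|y| ≤ 1`, so `e 0 = -c` would force `c * x ≤ 0`.
lemma head_eq_of_pos_mul (h : IsSignedBinaryExpansion e x) {c : ℤ} (hc : c = 1 ∨ c = -1)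
    (hpos : 0 < c * x) : e 0 = c := by
  have htail := (h.shift 1).abs_le_one
  simp only [range_one, sum_singleton, pow_one, zero_add] at htail
  rw [abs_le] at htail
  rcases h.1 0 with h0 | h0 <;> rcases hc with rfl | rfl <;> rw [h0] at htail ⊢ <;>
    push_cast at htail hpos ⊢ <;> first | rfl | linarith

-- If the first `k` digits alternate, the remainder `2^k (x - ∑_{j<k} e_j / 2^(j+1))` lies within
-- `1/3` of `(-1)^k / 3`, so it has the sign of `(-1)^k`, which forces the `k`-th digit.
lemma eq_neg_one_pow_of_abs_sub_one_third_lt (h : IsSignedBinaryExpansion e x) {M : ℕ}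
    (hx : |x - 1 / 3| < 1 / (3 * 2 ^ M)) :
    ∀ k ≤ M, e k = (-1) ^ k := by
  intro k
  induction k using Nat.strong_induction_on with
  | _ k ih =>
    intro hkM
    have hprefix : ∑ j ∈ range k, (e j : ℝ) / 2 ^ (j + 1) = 1 / 3 - (-1) ^ k / (3 * 2 ^ k) := by
      rw [← sum_range_neg_one_pow_div_two_pow]
      refine sum_congr rfl fun j hj => ?_
      rw [ih j (mem_range.mp hj) (by linarith [mem_range.mp hj])]
      push_cast
      rfl
    have hclose : |2 ^ k * (x - 1 / 3)| < 1 / 3 := by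
      have h2k : (2 : ℝ) ^ k ≤ 2 ^ M := pow_le_pow_right₀ one_le_two hkM
      rw [abs_mul, abs_of_pos (by positivity)]
      calc 2 ^ k * |x - 1 / 3| ≤ 2 ^ M * |x - 1 / 3| := by gcongr
        _ < 2 ^ M * (1 / (3 * 2 ^ M)) := by gcongr
        _ = 1 / 3 := by field_simp
    have hrem : 2 ^ k * (x - ∑ j ∈ range k, (e j : ℝ) / 2 ^ (j + 1)) =
        2 ^ k * (x - 1 / 3) + (-1) ^ k / 3 := by
      rw [hprefix]
      field_simp
      ring
    have hsign : 0 < ((-1) ^ k : ℤ) * (2 ^ k * (x - ∑ j ∈ range k, (e j : ℝ) / 2 ^ (j + 1))) := by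
      rw [abs_lt] at hclose
      push_cast
      rw [hrem]
      rcases neg_one_pow_eq_or ℝ k with hk | hk <;> rw [hk] <;> linarith
    simpa using (h.shift k).head_eq_of_pos_mul (neg_one_pow_eq_or ℤ k) hsign

end IsSignedBinaryExpansion

lemma odd_sub_of_sum_Icc_eq_zero {e : ℕ → ℤ} (he : ∀ j, e j = 1 ∨ e j = -1) {n m : ℕ}
    (hnm : n ≤ m) (h : ∑ j ∈ Icc n m, e j = 0) : Odd (m - n) := by
  have heven : Even (∑ j ∈ Icc n m, (e j - 1)) :=
    even_sum _ fun j _ => by rcases he j with hj | hj <;> simp [hj]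
  rw [sum_sub_distrib, h, sum_const, Nat.card_Icc, zero_sub, even_neg, nsmul_eq_mul, mul_one,
    Int.even_coe_nat, Nat.even_iff] at heven
  rw [Nat.odd_iff]
  omega

lemma sum_Icc_neg_one_pow_eq_zero {n m : ℕ} (h : Odd (m - n)) :
    ∑ j ∈ Icc n m, (-1 : ℤ) ^ j = 0 := by
  have hlen : Even (m + 1 - n) := by
    rw [Nat.even_iff]; rw [Nat.odd_iff] at h; omega
  rw [← Ico_add_one_right_eq_Icc, sum_Ico_eq_sum_range]
  simp_rw [pow_add]
  rw [← mul_sum, neg_one_geom_sum, if_pos hlen, mul_zero]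

noncomputable def loopTerm (u : ℕ → ℕ → ℝ≥0∞) (e : ℕ → ℤ) (p : ℕ × ℕ) : ℝ≥0∞ :=
  if p.1 ≤ p.2 ∧ ∑ j ∈ Icc p.1 p.2, e j = 0 then u p.1 p.2 else 0

lemma U_eq_tsum_loopTerm (u : ℕ → ℕ → ℝ≥0∞) (d : ℝ → ℕ → ℤ) (x : ℝ) :
    U u d x = ∑' p, loopTerm u (d x) p :=
  rfl

lemma loopTerm_congr {u : ℕ → ℕ → ℝ≥0∞} {e f : ℕ → ℤ} {p : ℕ × ℕ}
    (h : ∀ j ≤ p.2, e j = f j) : loopTerm u e p = loopTerm u f p := by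
  unfold loopTerm
  rw [sum_congr rfl fun j hj => h j (mem_Icc.mp hj).2]

lemma loopTerm_le_loopTerm_neg_one_pow {e : ℕ → ℤ} (he : ∀ j, e j = 1 ∨ e j = -1)
    (u : ℕ → ℕ → ℝ≥0∞) (p : ℕ × ℕ) :
    loopTerm u e p ≤ loopTerm u (fun j => (-1) ^ j) p := by
  unfold loopTerm
  split_ifs with he0 halt0
  · exact le_rfl
  · exact (halt0 ⟨he0.1,
      sum_Icc_neg_one_pow_eq_zero (odd_sub_of_sum_Icc_eq_zero he he0.1 he0.2)⟩).elim
  · exact zero_le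
  · exact le_rfl

-- The loops of the alternating sequence are the intervals `[n, n + 2k + 1]`.
lemma tsum_loopTerm_neg_one_pow (v : ℕ → ℝ≥0∞) :
    ∑' p, loopTerm (fun _ m => v m) (fun j => (-1) ^ j) p = ∑' k, ∑' n, v (n + (2 * k + 1)) := by
  let g : ℕ × ℕ → ℕ × ℕ := fun q => (q.2, q.2 + (2 * q.1 + 1))
  have hg : Function.Injective g := fun q q' hq => by
    simp only [g, Prod.mk.injEq] at hq
    ext <;> omega
  have hsupp : Function.support (loopTerm (fun _ m => v m) (fun j => (-1) ^ j)) ⊆ Set.range g := by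
    intro p hp
    rw [Function.mem_support, loopTerm, ite_ne_right_iff] at hp
    obtain ⟨k, hk⟩ := odd_sub_of_sum_Icc_eq_zero (fun j => neg_one_pow_eq_or ℤ j) hp.1.1 hp.1.2
    exact ⟨(k, p.1), by simp only [g]; ext <;> simp; omega⟩
  rw [← hg.tsum_eq hsupp, ENNReal.tsum_prod']
  refine tsum_congr fun k => tsum_congr fun n => ?_
  simp [loopTerm, g, sum_Icc_neg_one_pow_eq_zero (m := n + (2 * k + 1)) (n := n) (by simp)]

lemma le_essSup_of_ae_imp_le {α β : Type*} [MeasurableSpace α] [CompleteLinearOrder β]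
    {μ : Measure α} {f : α → β} {s : Set α} {c : β} (hs : μ s ≠ 0)
    (h : ∀ᵐ x ∂μ, x ∈ s → c ≤ f x) : c ≤ essSup f μ := by
  by_contra! hlt
  refine hs (measure_eq_zero_iff_ae_notMem.mpr ?_)
  filter_upwards [h, ae_lt_of_essSup_lt hlt] with x hle hlt' hx
  exact (hle hx).not_gt hlt'

lemma volume_restrict_Icc_ball_ne_zero {a b x δ : ℝ} (hx : x ∈ Set.Ioo a b) (hδ : 0 < δ) :
    volume.restrict (Set.Icc a b) (ball x δ) ≠ 0 := by
  rw [Measure.restrict_apply measurableSet_ball]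
  refine (pos_iff_ne_zero.mp ?_)
  calc 0 < volume (ball x δ ∩ Set.Ioo a b) :=
        (isOpen_ball.inter isOpen_Ioo).measure_pos volume ⟨x, mem_ball_self hδ, hx⟩
    _ ≤ volume (ball x δ ∩ Set.Icc a b) := by gcongr; exact Set.Ioo_subset_Icc_self

theorem stmt_18 (d : ℝ → ℕ → ℤ)
    (hd : ∀ᵐ x ∂(volume.restrict (Set.Icc (-1 : ℝ) 1)),
      (∀ n, d x n = 1 ∨ d x n = -1) ∧ HasSum (fun n : ℕ => (d x n : ℝ) / 2 ^ (n + 1)) x)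
    (hd13 : ∀ n, d (1 / 3) n = (-1) ^ n) :
    U (fun _ m => ENNReal.ofReal (4 / (((m : ℝ) + 2) * ((m : ℝ) + 3) * ((m : ℝ) + 4)))) d (1 / 3) =
        ENNReal.ofReal (2 * Real.log 2 - 1) ∧
    essSup
        (U (fun _ m => ENNReal.ofReal (4 / (((m : ℝ) + 2) * ((m : ℝ) + 3) * ((m : ℝ) + 4)))) d)
        (volume.restrict (Set.Icc (-1 : ℝ) 1)) =
      U (fun _ m => ENNReal.ofReal (4 / (((m : ℝ) + 2) * ((m : ℝ) + 3) * ((m : ℝ) + 4)))) d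
        (1 / 3) := by
  have halt : d (1 / 3) = fun j => (-1) ^ j := funext hd13
  have hvalue : U (fun _ m => ENNReal.ofReal (loopWeight m)) d (1 / 3) =
      ENNReal.ofReal (2 * Real.log 2 - 1) := by
    rw [U_eq_tsum_loopTerm, halt, tsum_loopTerm_neg_one_pow, tsum_tsum_loopWeight]
  refine ⟨hvalue, le_antisymm (essSup_le_of_ae_le _ ?_) ?_⟩
  · filter_upwards [hd] with x hx
    rw [U_eq_tsum_loopTerm, U_eq_tsum_loopTerm, halt]
    exact ENNReal.tsum_le_tsum (loopTerm_le_loopTerm_neg_one_pow hx.1 _)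
  · rw [U_eq_tsum_loopTerm, ENNReal.tsum_eq_iSup_sum]
    refine iSup_le fun s => ?_
    set M := s.sup Prod.snd
    refine le_essSup_of_ae_imp_le
      (volume_restrict_Icc_ball_ne_zero (x := 1 / 3) (δ := 1 / (3 * 2 ^ M)) (by norm_num)
        (by positivity)) ?_
    filter_upwards [hd] with x hx hxball
    have hdigits := IsSignedBinaryExpansion.eq_neg_one_pow_of_abs_sub_one_third_lt hx
      (by rwa [mem_ball, Real.dist_eq] at hxball)
    calc ∑ p ∈ s, loopTerm _ (d (1 / 3)) p = ∑ p ∈ s, loopTerm _ (d x) p :=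
          sum_congr rfl fun p hp => loopTerm_congr fun j hj =>
            (hd13 j).trans (hdigits j (hj.trans (le_sup hp))).symm
      _ ≤ ∑' p, loopTerm _ (d x) p := ENNReal.sum_le_tsum s
end
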